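/- arXiv:1309.1761 — 2 statements merged into one kernel-verified Lean document; each statement's English description precedes it below -/
import Mathlib

section
/- Fix an integer K ≥ 2. Let {z_n} be generated by the selective sampling process S(κ,Φ) where κ satisfies Σ_{n=1}^∞ ρ^{κ(n)} = ∞ for every 0 < ρ ≤ 1, and Φ is the non-modal count heuristic Φ(x,S) = |V_S(x)| − modefreq_f(V_S(x)) with V_S(x) the K-nearest neighbors of x with respect to S. If x ∈ X is contained in an f-contiguous component of positive μ-measure, then the nearest neighbor predictions satisfy ζ_n(x) → f(x) with probability one. -/
open MeasureTheory ProbabilityTheory Filter Metric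

/-- The support of a measure on a metric space: points all of whose open balls
have positive measure. -/
def measSupport {X : Type*} [MetricSpace X] [MeasurableSpace X]
    (μ : Measure X) : Set X :=
  {x | ∀ ε > 0, 0 < μ (ball x ε)}

/-- `b` is an `f`-boundary point iff every ball about `b` meets the set of points
with a different `f`-value in positive measure. -/
def IsFBoundaryPoint {X Y : Type*} [MetricSpace X] [MeasurableSpace X]
    (f : X → Y) (μ : Measure X) (b : X) : Prop :=
  ∀ ε > 0, 0 < μ (ball b ε ∩ {x | f x ≠ f b})

/-- The sample set `Z_n(ω) = {z_1(ω), …, z_n(ω)}`. -/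
def sampleSet {X Ω : Type*} (z : ℕ → Ω → X) (n : ℕ) (ω : Ω) : Set X :=
  {p | ∃ k, 1 ≤ k ∧ k ≤ n ∧ z k ω = p}

/-- `modefreq_f(A)`: the frequency of the mode of `A` under `f`, i.e. the
maximum over `y` of the number of elements of `A` with `f`-value `y`. -/
noncomputable def modeFreq {X Y : Type*} (f : X → Y) (A : Set X) : ℕ :=
  ⨆ y : Y, (A ∩ f ⁻¹' {y}).ncard

/-- `V` is a set of `K` nearest neighbors of `x` in `S`: a `K`-element subset of
`S` minimizing distance to `x`, and among all such, minimizing `modefreq_f`. -/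
def IsKNNSet {X Y : Type*} [MetricSpace X] (f : X → Y) (K : ℕ)
    (S : Set X) (x : X) (V : Finset X) : Prop :=
  V.card = K ∧ ↑V ⊆ S ∧
    (∀ v ∈ V, ∀ s ∈ S, s ∉ V → dist x v ≤ dist x s) ∧
    ∀ W : Finset X, W.card = K → ↑W ⊆ S →
      (∀ v ∈ W, ∀ s ∈ S, s ∉ W → dist x v ≤ dist x s) →
      modeFreq f (↑V : Set X) ≤ modeFreq f (↑W : Set X)

open scoped Classical in
/-- The non-modal count heuristic with `K`-nearest neighbors:
`Φ(x,S) = |V_S(x)| − modefreq_f(V_S(x))`, where `V_S(x)` is a `K`-set of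
nearest neighbors of `x` minimizing `modefreq_f` (so the value is
`K - min modefreq`), and `V_S(x) = ∅` when `x ∈ S`. -/
noncomputable def nmcKNN {X Y : Type*} [MetricSpace X] (f : X → Y) (K : ℕ)
    (x : X) (S : Set X) : ℤ :=
  if x ∈ S then 0
  else (K : ℤ) - sInf {m : ℕ | ∃ V : Finset X, IsKNNSet f K S x V ∧
    modeFreq f (↑V : Set X) = m}

/-- `R` is `f`-contiguous: `R` is connected, `f` is constant on `R`, `R` lies in
the support of `μ`, and `R` contains no `f`-boundary point. -/
def IsFContiguous {X Y : Type*} [MetricSpace X] [MeasurableSpace X]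
    (f : X → Y) (μ : Measure X) (R : Set X) : Prop :=
  IsPreconnected R ∧ (∀ a ∈ R, ∀ b ∈ R, f a = f b) ∧
    R ⊆ measSupport μ ∧ ∀ b ∈ R, ¬ IsFBoundaryPoint f μ b

/-- An `f`-contiguous component: a maximal `f`-contiguous set. -/
def IsFContiguousComponent {X Y : Type*} [MetricSpace X] [MeasurableSpace X]
    (f : X → Y) (μ : Measure X) (C : Set X) : Prop :=
  IsFContiguous f μ C ∧ ∀ R : Set X, IsFContiguous f μ R → C ⊆ R → R = C

/-!
Since `x` lies in `supp μ` and is not an `f`-boundary point, some ball `B` about `x` has positive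
measure and `f = f x` holds `μ`-a.e. on `B`. The events "all `κ (n+1)` candidates of step `n+1`
land in `B`" are independent with probabilities `μ(B)^κ(n+1)`, whose sum diverges, so by the
second Borel–Cantelli lemma one of them almost surely occurs, and the candidate selected at that
step is a sample in `B`. Almost surely no candidate ever falls into the null set of points of `B`
with a different label, so from that step on the nearest sample to `x` lies in `B` and has label
`f x`.
-/

open scoped ENNReal

theorem exists_measure_ball_inter_ne_eq_zero {X Y : Type*} [MetricSpace X] [MeasurableSpace X]
    {f : X → Y} {μ : Measure X} {x : X} (hx : ¬ IsFBoundaryPoint f μ x) :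
    ∃ ε > 0, μ (ball x ε ∩ {y | f y ≠ f x}) = 0 := by
  simpa [IsFBoundaryPoint] using hx

theorem not_summable_of_tendsto_sum_Icc_atTop {g : ℕ → ℝ} (hg : ∀ n, 0 ≤ g n)
    (h : Tendsto (fun N => ∑ n ∈ Finset.Icc 1 N, g n) atTop atTop) : ¬ Summable g := by
  intro hsum
  obtain ⟨N, hN⟩ := (h.eventually_gt_atTop (∑' n, g n)).exists
  exact hN.not_ge (hsum.sum_le_tsum _ fun n _ => hg n)

theorem tsum_pow_succ_eq_top {q : ℝ≥0∞} {k : ℕ → ℕ}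
    (h : Tendsto (fun N => ∑ n ∈ Finset.Icc 1 N, q.toReal ^ k n) atTop atTop) :
    ∑' n, q ^ k (n + 1) = ∞ := by
  by_contra hfin
  have hsum : Summable fun n => q.toReal ^ k (n + 1) := by
    simpa only [ENNReal.toReal_pow] using ENNReal.summable_toReal hfin
  exact not_summable_of_tendsto_sum_Icc_atTop (fun n => by positivity) h
    ((summable_nat_add_iff 1).mp hsum)

section Candidates

variable {Ω X : Type*} [MeasurableSpace Ω] [MeasurableSpace X] {P : Measure Ω} {μ : Measure X}
  {k : ℕ → ℕ} {ξ : (n : ℕ) → Fin (k n) → Ω → X}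

theorem measure_biInter_iInter_preimage_eq_prod (hmeas : ∀ n i, Measurable (ξ n i))
    (hlaw : ∀ n i, P.map (ξ n i) = μ)
    (hindep : iIndepFun (fun p : Σ n, Fin (k n) => ξ p.1 p.2) P)
    {B : Set X} (hB : MeasurableSet B) (s : Finset ℕ) :
    P (⋂ n ∈ s, ⋂ i, ξ n i ⁻¹' B) = ∏ n ∈ s, μ B ^ k n := by
  have hblocks : (⋂ n ∈ s, ⋂ i, ξ n i ⁻¹' B) =
      ⋂ p ∈ s.sigma fun n => Finset.univ,
        (fun p : Σ n, Fin (k n) => ξ p.1 p.2) p ⁻¹' B := by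
    ext ω
    simp only [Set.mem_iInter, Finset.mem_sigma, Finset.mem_univ, and_true, Set.mem_preimage,
      Sigma.forall]
    exact ⟨fun h n i hn => h n hn i, fun h n hn i => h n i hn⟩
  rw [hblocks, hindep.measure_inter_preimage_eq_mul _ fun _ _ => hB, Finset.prod_sigma]
  have hcand : ∀ n i, P (ξ n i ⁻¹' B) = μ B := fun n i => by
    rw [← hlaw n i, Measure.map_apply (hmeas n i) hB]
  simp [hcand]

theorem ae_frequently_forall_mem_of_iIndepFun (hmeas : ∀ n i, Measurable (ξ n i))
    (hlaw : ∀ n i, P.map (ξ n i) = μ)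
    (hindep : iIndepFun (fun p : Σ n, Fin (k n) => ξ p.1 p.2) P)
    {B : Set X} (hB : MeasurableSet B) (hdiv : ∑' n, μ B ^ k n = ∞) :
    ∀ᵐ ω ∂P, ∃ᶠ n in atTop, ∀ i, ξ n i ω ∈ B := by
  have : IsProbabilityMeasure P := hindep.isProbabilityMeasure
  set E : ℕ → Set Ω := fun n => ⋂ i, ξ n i ⁻¹' B
  have hE : ∀ n, MeasurableSet (E n) := fun n => .iInter fun i => hmeas n i hB
  have hprod := measure_biInter_iInter_preimage_eq_prod hmeas hlaw hindep hB
  have hPE : ∀ n, P (E n) = μ B ^ k n := fun n => by simpa using hprod {n}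
  have hindepE : iIndepSet E P := by
    rw [iIndepSet_iff_meas_biInter hE]
    intro s
    simp only [hprod, hPE, E]
  have hlimsup : P (limsup E atTop) = 1 :=
    measure_limsup_eq_one hE hindepE (by simpa only [hPE] using hdiv)
  filter_upwards [(mem_ae_iff_prob_eq_one (MeasurableSet.measurableSet_limsup hE)).2 hlimsup]
    with ω hω
  simpa [E] using mem_limsup_iff_frequently_mem.1 hω

end Candidates

theorem eventually_nearestNeighbor_eq_of_mem_ball {X Y : Type*} [MetricSpace X] {f : X → Y}
    {w : ℕ → X} {pred : ℕ → Y} {x : X} {ε : ℝ}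
    (hpred : ∀ n, 1 ≤ n → ∃ i, 1 ≤ i ∧ i ≤ n ∧
      (∀ j, 1 ≤ j → j ≤ n → dist x (w i) ≤ dist x (w j)) ∧ pred n = f (w i))
    (hclean : ∀ i, 1 ≤ i → w i ∈ ball x ε → f (w i) = f x)
    {m : ℕ} (hm : 1 ≤ m) (hwm : w m ∈ ball x ε) :
    ∀ᶠ n in atTop, pred n = f x := by
  filter_upwards [eventually_ge_atTop m] with n hmn
  obtain ⟨i, hi, -, hnearest, hpred_eq⟩ := hpred n (hm.trans hmn)
  have hwi : w i ∈ ball x ε :=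
    mem_ball'.2 ((hnearest m hm hmn).trans_lt (mem_ball'.1 hwm))
  rw [hpred_eq, hclean i hi hwi]

theorem nmc_knn_pointwise_convergence_general
    {X : Type*} [MetricSpace X] [MeasurableSpace X] [BorelSpace X]
    {Y : Type*}
    (μ : Measure X) [IsProbabilityMeasure μ] (f : X → Y)
    {Ω : Type*} [MeasurableSpace Ω] (P : Measure Ω)
    (K : ℕ)
    -- the candidate-count function κ : ℕ⁺ → ℕ⁺ (κ (n+1) candidates at step n+1)
    (κ : ℕ → ℕ)
    (hκ : ∀ ρ : ℝ, 0 < ρ → ρ ≤ 1 →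
      Tendsto (fun N => ∑ n ∈ Finset.Icc 1 N, ρ ^ κ n) atTop atTop)
    -- at step n+1, κ(n+1) candidates are drawn, iid with law μ
    (cand : (n : ℕ) → Fin (κ (n + 1)) → Ω → X)
    (hmeas : ∀ n i, Measurable (cand n i))
    (hlaw : ∀ n i, P.map (cand n i) = μ)
    (hindep : iIndepFun
      (fun p : Σ n : ℕ, Fin (κ (n + 1)) => cand p.1 p.2) P)
    -- the sample z_{n+1} is a candidate maximizing the heuristic Φ(·, Z_n)
    (z : ℕ → Ω → X)
    (hsel : ∀ ω n, ∃ i : Fin (κ (n + 1)), z (n + 1) ω = cand n i ω ∧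
      ∀ j : Fin (κ (n + 1)),
        nmcKNN f K (cand n j ω) (sampleSet z n ω) ≤
          nmcKNN f K (cand n i ω) (sampleSet z n ω))
    -- ζ_n is a nearest neighbor prediction over Z_n (ties broken arbitrarily)
    (ζ : ℕ → Ω → X → Y)
    (hζ : ∀ ω x n, 1 ≤ n → ∃ i, 1 ≤ i ∧ i ≤ n ∧
      (∀ j, 1 ≤ j → j ≤ n → dist x (z i ω) ≤ dist x (z j ω)) ∧
      ζ n ω x = f (z i ω))
    (x : X) (C : Set X) (hC : IsFContiguousComponent f μ C) (hxC : x ∈ C) :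
    ∀ᵐ ω ∂P, ∀ᶠ n in atTop, ζ n ω x = f x := by
  obtain ⟨ε, hε, hnull⟩ := exists_measure_ball_inter_ne_eq_zero (hC.1.2.2.2 x hxC)
  have hball : 0 < μ.real (ball x ε) :=
    ENNReal.toReal_pos (hC.1.2.2.1 hxC ε hε).ne' (measure_ne_top _ _)
  have hhit : ∀ᵐ ω ∂P, ∃ᶠ n in atTop, ∀ i, cand n i ω ∈ ball x ε :=
    ae_frequently_forall_mem_of_iIndepFun hmeas hlaw hindep measurableSet_ball
      (tsum_pow_succ_eq_top (hκ _ hball measureReal_le_one))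
  have hclean : ∀ᵐ ω ∂P, ∀ n i, cand n i ω ∉ ball x ε ∩ {y | f y ≠ f x} :=
    ae_all_iff.2 fun n => ae_all_iff.2 fun i => ae_of_ae_map (hmeas n i).aemeasurable
      (by rw [hlaw n i]; exact measure_eq_zero_iff_ae_notMem.1 hnull)
  filter_upwards [hhit, hclean] with ω hhit hclean
  have hsample : ∀ k, ∃ i, z (k + 1) ω = cand k i ω := fun k => (hsel ω k).imp fun _ h => h.1
  obtain ⟨n, hn⟩ := hhit.exists
  obtain ⟨i, hzi⟩ := hsample n
  refine eventually_nearestNeighbor_eq_of_mem_ball (hζ ω x) (fun j hj hzj => ?_)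
    (m := n + 1) le_add_self (hzi ▸ hn i)
  obtain ⟨k, rfl⟩ := Nat.exists_eq_add_of_le' hj
  obtain ⟨i', hzk⟩ := hsample k
  by_contra hne
  exact hclean k i' ⟨hzk ▸ hzj, hzk ▸ hne⟩

/-- **Convergence of the non-modal count heuristic (`K`-nearest neighbors).**
Fix `K ≥ 2`. If the samples are generated by the selective sampling process
`S(κ, Φ)` with `Φ(x,S) = |V_S(x)| − modefreq_f(V_S(x))` (`V_S(x)` the
`K`-nearest neighbors) and `∑ ρ^{κ(n)} = ∞` for all `0 < ρ ≤ 1`, then at every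
point `x` contained in an `f`-contiguous component of positive measure, the
nearest neighbor predictions `ζ_n(x)` converge to `f(x)` with probability
one. -/
theorem nmc_knn_pointwise_convergence
    {X : Type*} [MetricSpace X] [MeasurableSpace X] [BorelSpace X]
    {Y : Type*} [Countable Y]
    (μ : Measure X) [IsProbabilityMeasure μ] (f : X → Y)
    {Ω : Type*} [MeasurableSpace Ω] (P : Measure Ω) [IsProbabilityMeasure P]
    (K : ℕ) (hK : 2 ≤ K)
    -- the candidate-count function κ : ℕ⁺ → ℕ⁺ (κ (n+1) candidates at step n+1)
    (κ : ℕ → ℕ) (hκpos : ∀ n, 1 ≤ κ n)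
    (hκ : ∀ ρ : ℝ, 0 < ρ → ρ ≤ 1 →
      Tendsto (fun N => ∑ n ∈ Finset.Icc 1 N, ρ ^ κ n) atTop atTop)
    -- at step n+1, κ(n+1) candidates are drawn, iid with law μ
    (cand : (n : ℕ) → Fin (κ (n + 1)) → Ω → X)
    (hmeas : ∀ n i, Measurable (cand n i))
    (hlaw : ∀ n i, P.map (cand n i) = μ)
    (hindep : iIndepFun
      (fun p : Σ n : ℕ, Fin (κ (n + 1)) => cand p.1 p.2) P)
    -- the sample z_{n+1} is a candidate maximizing the heuristic Φ(·, Z_n)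
    (z : ℕ → Ω → X)
    (hsel : ∀ ω n, ∃ i : Fin (κ (n + 1)), z (n + 1) ω = cand n i ω ∧
      ∀ j : Fin (κ (n + 1)),
        nmcKNN f K (cand n j ω) (sampleSet z n ω) ≤
          nmcKNN f K (cand n i ω) (sampleSet z n ω))
    -- ζ_n is a nearest neighbor prediction over Z_n (ties broken arbitrarily)
    (ζ : ℕ → Ω → X → Y)
    (hζ : ∀ ω x n, 1 ≤ n → ∃ i, 1 ≤ i ∧ i ≤ n ∧
      (∀ j, 1 ≤ j → j ≤ n → dist x (z i ω) ≤ dist x (z j ω)) ∧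
      ζ n ω x = f (z i ω))
    (x : X) (C : Set X) (hC : IsFContiguousComponent f μ C) (hxC : x ∈ C)
    (hCpos : 0 < μ C) :
    ∀ᵐ ω ∂P, ∀ᶠ n in atTop, ζ n ω x = f x :=
  nmc_knn_pointwise_convergence_general μ f P K κ hκ cand hmeas hlaw hindep z hsel ζ hζ x C hC hxC
end

section
/- Fix an integer K ≥ 2. Let {z_n} be generated by the selective sampling process S(κ,Φ) where κ satisfies Σ_{n=1}^∞ ρ^{κ(n)} = ∞ for every 0 < ρ ≤ 1, and Φ is the non-modal count heuristic Φ(x,S) = |V_S(x)| − modefreq_f(V_S(x)) with V_S(x) the K-nearest neighbors of x with respect to S. Let Q_n = {x ∈ X : Φ(x, Z_n) > 0} and Q = limsup_{n→∞} Q_n. If X is separable and the set of f-boundary points has μ-measure zero, then μ(Q) = 0 with probability one. -/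
/-
By the second Borel–Cantelli lemma (this is where `∑ ρ ^ κ n = ∞` enters), almost surely every
open set of positive measure eventually receives a whole block of candidates, hence a sample.
Since `X` is second countable, almost surely no candidate lies in the null set of points whose
label differs from the essential label of one of their neighbourhoods. For such `ω`, a point `x`
of the support of `μ` that is neither sampled nor an `f`-boundary point is an accumulation point
of the samples, so some ball around `x` on which `f = f x` a.e. eventually holds `K` samples, all
labelled `f x`. From then on the `K` nearest neighbours of `x` are unanimous and `Φ(x, Zₙ) = 0`.
Hence `limsup Qₙ` lies in the complement of the support union the `f`-boundary, a null set.
-/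

open MeasureTheory ProbabilityTheory Filter Metric

open scoped ENNReal Topology
open TopologicalSpace

section NearestNeighbors

variable {X Y : Type*}

lemma ncard_inter_preimage_le_card (f : X → Y) (V : Finset X) (y : Y) :
    ((↑V : Set X) ∩ f ⁻¹' {y}).ncard ≤ V.card := by
  simpa using Set.ncard_le_ncard Set.inter_subset_left V.finite_toSet

lemma modeFreq_le_card (f : X → Y) (V : Finset X) : modeFreq f (↑V : Set X) ≤ V.card := by
  rcases isEmpty_or_nonempty Y with _ | _
  · simp [modeFreq]
  · exact ciSup_le (ncard_inter_preimage_le_card f V)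

lemma modeFreq_eq_card_of_forall_eq (f : X → Y) {V : Finset X} {y : Y}
    (hV : ∀ v ∈ V, f v = y) : modeFreq f (↑V : Set X) = V.card := by
  refine (modeFreq_le_card f V).antisymm ?_
  have hlevel : (↑V : Set X) ∩ f ⁻¹' {y} = ↑V := Set.inter_eq_left.2 hV
  calc V.card = ((↑V : Set X) ∩ f ⁻¹' {y}).ncard := by rw [hlevel, Set.ncard_coe_finset]
    _ ≤ modeFreq f (↑V : Set X) :=
      le_ciSup ⟨V.card, Set.forall_mem_range.2 (ncard_inter_preimage_le_card f V)⟩ y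

variable [MetricSpace X]

def IsNearestIn (S : Set X) (x : X) (W : Finset X) : Prop :=
  ↑W ⊆ S ∧ ∀ v ∈ W, ∀ s ∈ S, s ∉ W → dist x v ≤ dist x s

lemma exists_isNearestIn {S : Set X} (hS : S.Finite) (x : X) {k : ℕ}
    (hk : k ≤ hS.toFinset.card) : ∃ W : Finset X, W.card = k ∧ IsNearestIn S x W := by
  classical
  induction k with
  | zero => exact ⟨∅, rfl, by simp, by simp⟩
  | succ k ih =>
    obtain ⟨W, hWcard, hWS, hWnear⟩ := ih (by omega)
    have hrest : (hS.toFinset \ W).Nonempty := by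
      rw [Finset.sdiff_nonempty]
      intro hsub
      have := Finset.card_le_card hsub
      omega
    obtain ⟨s₀, hs₀, hs₀min⟩ := Finset.exists_min_image _ (fun s => dist x s) hrest
    rw [Finset.mem_sdiff, Set.Finite.mem_toFinset] at hs₀
    refine ⟨insert s₀ W, by rw [Finset.card_insert_of_notMem hs₀.2, hWcard], ?_, ?_⟩
    · simpa [Set.insert_subset_iff] using ⟨hs₀.1, hWS⟩
    · intro v hv s hs hsW
      rw [Finset.mem_insert, not_or] at hsW
      rcases Finset.mem_insert.1 hv with rfl | hv
      · exact hs₀min s (by simpa using ⟨hs, hsW.2⟩)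
      · exact hWnear v hv s hs hsW.2

lemma IsNearestIn.subset_ball {S : Set X} {x : X} {W C : Finset X} {δ : ℝ}
    (hW : IsNearestIn S x W) (hcard : W.card ≤ C.card) (hC : ↑C ⊆ S ∩ Metric.ball x δ) :
    ↑W ⊆ Metric.ball x δ := by
  intro v hv
  by_cases hCW : C ⊆ W
  · rw [← Finset.eq_of_subset_of_card_le hCW hcard] at hv
    exact (hC hv).2
  · obtain ⟨c, hcC, hcW⟩ := Finset.not_subset.1 hCW
    obtain ⟨hcS, hcx⟩ := hC hcC
    rw [Metric.mem_ball, dist_comm] at hcx ⊢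
    exact (hW.2 v hv c hcS hcW).trans_lt hcx

lemma exists_isKNNSet (f : X → Y) {K : ℕ} {S : Set X} (hS : S.Finite) (x : X)
    (hK : K ≤ hS.toFinset.card) : ∃ V : Finset X, IsKNNSet f K S x V := by
  classical
  let candidates := hS.toFinset.powerset.filter fun W => W.card = K ∧ IsNearestIn S x W
  have hmem : ∀ W, W ∈ candidates ↔ W.card = K ∧ IsNearestIn S x W := fun W => by
    simp only [candidates, Finset.mem_filter, Finset.mem_powerset, and_iff_right_iff_imp]
    exact fun h _ hw => hS.mem_toFinset.2 (h.2.1 hw)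
  obtain ⟨W₀, hW₀⟩ := exists_isNearestIn hS x hK
  obtain ⟨V, hV, hVmin⟩ := Finset.exists_min_image candidates
    (fun W => modeFreq f (↑W : Set X)) ⟨W₀, (hmem W₀).2 hW₀⟩
  obtain ⟨hVcard, hVS, hVnear⟩ := (hmem V).1 hV
  exact ⟨V, hVcard, hVS, hVnear, fun W hW hWS hWnear => hVmin W ((hmem W).2 ⟨hW, hWS, hWnear⟩)⟩

lemma nmcKNN_of_mem (f : X → Y) (K : ℕ) {x : X} {S : Set X} (hx : x ∈ S) :
    nmcKNN f K x S = 0 := by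
  simp [nmcKNN, hx]

lemma nmcKNN_eq_zero_of_subset_ball (f : X → Y) {K : ℕ} {S : Set X} (hS : S.Finite)
    {x : X} {δ : ℝ} {C : Finset X} (hC : C.card = K) (hCS : ↑C ⊆ S ∩ Metric.ball x δ)
    (hlabel : ∀ w ∈ S ∩ Metric.ball x δ, f w = f x) : nmcKNN f K x S = 0 := by
  classical
  by_cases hx : x ∈ S
  · exact nmcKNN_of_mem f K hx
  have hunanimous : ∀ W : Finset X, W.card = K → IsNearestIn S x W →
      modeFreq f (↑W : Set X) = K := by
    intro W hW hWnear
    have hball := hWnear.subset_ball (hW.trans hC.symm).le hCS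
    rw [← hW]
    exact modeFreq_eq_card_of_forall_eq f fun w hw => hlabel w ⟨hWnear.1 hw, hball hw⟩
  have hK : K ≤ hS.toFinset.card :=
    hC ▸ Finset.card_le_card fun c hc => hS.mem_toFinset.2 (hCS hc).1
  obtain ⟨V, hV⟩ := exists_isKNNSet f hS x hK
  have hmodes : {m : ℕ | ∃ V : Finset X, IsKNNSet f K S x V ∧ modeFreq f (↑V : Set X) = m}
      = {K} := by
    refine Set.eq_singleton_iff_unique_mem.2 ⟨⟨V, hV, hunanimous V hV.1 ⟨hV.2.1, hV.2.2.1⟩⟩, ?_⟩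
    rintro m ⟨W, hW, rfl⟩
    exact hunanimous W hW.1 ⟨hW.2.1, hW.2.2.1⟩
  simp [nmcKNN, hx, hmodes]

end NearestNeighbors

section SampleSet

variable {X Ω : Type*} (z : ℕ → Ω → X) (ω : Ω)

lemma sampleSet_mono : Monotone fun n => sampleSet z n ω :=
  fun _ _ hnm _ ⟨k, hk₁, hkn, hk⟩ => ⟨k, hk₁, hkn.trans hnm, hk⟩

lemma sampleSet_finite (n : ℕ) : (sampleSet z n ω).Finite :=
  ((Set.finite_Icc 1 n).image fun k => z k ω).subset fun _ ⟨k, hk₁, hkn, hk⟩ => ⟨k, ⟨hk₁, hkn⟩, hk⟩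

lemma succ_mem_sampleSet (n : ℕ) : z (n + 1) ω ∈ sampleSet z (n + 1) ω :=
  ⟨n + 1, by omega, le_rfl, rfl⟩

lemma exists_eq_of_mem_iUnion_sampleSet {ι : ℕ → Type*} {cand : (n : ℕ) → ι n → Ω → X}
    (hz : ∀ n, ∃ i, z (n + 1) ω = cand n i ω) {w : X} (hw : w ∈ ⋃ n, sampleSet z n ω) :
    ∃ m i, cand m i ω = w := by
  obtain ⟨n, k, hk₁, -, rfl⟩ := Set.mem_iUnion.1 hw
  obtain ⟨m, rfl⟩ := Nat.exists_eq_add_of_le' hk₁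
  obtain ⟨i, hi⟩ := hz m
  exact ⟨m, i, hi.symm⟩

end SampleSet

def IsLabelRegularAt {X Y : Type*} [TopologicalSpace X] [MeasurableSpace X] (μ : Measure X)
    (f : X → Y) (w : X) : Prop :=
  ∀ y, (∃ U ∈ 𝓝 w, μ (U ∩ {v | f v ≠ y}) = 0) → f w = y

section SampleGeometry

variable {X Y : Type*}

lemma accPt_of_mem_support [TopologicalSpace X] [MeasurableSpace X] {μ : Measure X} {D : Set X}
    (hdense : ∀ U, IsOpen U → 0 < μ U → (U ∩ D).Nonempty) {x : X} (hx : x ∈ μ.support)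
    (hxD : x ∉ D) : AccPt x (𝓟 D) := by
  refine accPt_iff_nhds.2 fun U hU => ?_
  obtain ⟨w, hwU, hwD⟩ := hdense (interior U) isOpen_interior
    ((Measure.mem_support_iff_forall x).1 hx _ (interior_mem_nhds.2 hU))
  exact ⟨w, ⟨interior_subset hwU, hwD⟩, fun hwx => hxD (hwx ▸ hwD)⟩

variable [MetricSpace X] [MeasurableSpace X]

lemma eventually_nmcKNN_eq_zero (μ : Measure X) (f : X → Y) (K : ℕ) {S : ℕ → Set X}
    (hmono : Monotone S) (hfin : ∀ n, (S n).Finite)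
    (hlabel : ∀ w ∈ ⋃ n, S n, IsLabelRegularAt μ f w)
    (hdense : ∀ U, IsOpen U → 0 < μ U → (U ∩ ⋃ n, S n).Nonempty)
    {x : X} (hx : x ∈ μ.support) (hxb : ¬ IsFBoundaryPoint f μ x) :
    ∀ᶠ n in atTop, nmcKNN f K x (S n) = 0 := by
  by_cases hxS : x ∈ ⋃ n, S n
  · obtain ⟨N, hN⟩ := Set.mem_iUnion.1 hxS
    exact eventually_atTop.2 ⟨N, fun n hn => nmcKNN_of_mem f K (hmono hn hN)⟩
  obtain ⟨ε, hε, hnull⟩ : ∃ ε > 0, μ (ball x ε ∩ {v | f v ≠ f x}) = 0 := by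
    simpa [IsFBoundaryPoint] using hxb
  have hinf : (ball x ε ∩ ⋃ n, S n).Infinite :=
    Set.Infinite.of_accPt
      ((accPt_of_mem_support hdense hx hxS).nhds_inter (ball_mem_nhds x hε))
  obtain ⟨C, hCsub, hCcard⟩ := hinf.exists_subset_card_eq K
  obtain ⟨N, hCN⟩ := hmono.directed_le.exists_mem_subset_of_finset_subset_biUnion
    (hCsub.trans Set.inter_subset_right)
  refine eventually_atTop.2 ⟨N, fun n hn => nmcKNN_eq_zero_of_subset_ball f (hfin n) hCcard
    (fun c hc => ⟨hmono hn (hCN hc), (hCsub hc).1⟩) fun w hw => ?_⟩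
  exact hlabel w (Set.mem_iUnion.2 ⟨n, hw.1⟩) (f x) ⟨ball x ε, isOpen_ball.mem_nhds hw.2, hnull⟩

end SampleGeometry

section Sampling

lemma ENNReal.tsum_eq_top_of_tendsto_sum_toReal {g : ℕ → ℝ≥0∞}
    (hg : Tendsto (fun N => ∑ n ∈ Finset.range N, (g n).toReal) atTop atTop) : ∑' n, g n = ∞ := by
  by_contra hfin
  exact (summable_iff_not_tendsto_nat_atTop_of_nonneg fun n => ENNReal.toReal_nonneg).1
    (ENNReal.summable_toReal hfin) hg

variable {α Ω : Type*} [MeasurableSpace α] [MeasurableSpace Ω] {μ : Measure α} {P : Measure Ω}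

lemma measure_biInter_iInter_preimage {I : Type*} {ι : I → Type*} [∀ n, Fintype (ι n)]
    {cand : (n : I) → ι n → Ω → α} (hmeas : ∀ n i, Measurable (cand n i))
    (hlaw : ∀ n i, P.map (cand n i) = μ) (hindep : iIndepFun (fun p : Σ n, ι n => cand p.1 p.2) P)
    {A : Set α} (hA : MeasurableSet A) (F : Finset I) :
    P (⋂ n ∈ F, ⋂ i, cand n i ⁻¹' A) = ∏ n ∈ F, μ A ^ Fintype.card (ι n) := by
  classical
  have hblocks : (⋂ n ∈ F, ⋂ i, cand n i ⁻¹' A)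
      = ⋂ p ∈ F.sigma fun n => Finset.univ, cand p.1 p.2 ⁻¹' A := by
    ext ω
    simp only [Set.mem_iInter, Set.mem_preimage, Finset.mem_sigma, Finset.mem_univ, and_true,
      Sigma.forall]
    exact ⟨fun h n i hn => h n hn i, fun h n hn i => h n i hn⟩
  rw [hblocks, hindep.meas_biInter fun p _ => ⟨A, hA, rfl⟩, Finset.prod_sigma]
  refine Finset.prod_congr rfl fun n _ => ?_
  simp [← Measure.map_apply (hmeas _ _) hA, hlaw]

lemma ae_frequently_forall_mem {ι : ℕ → Type*} [∀ n, Fintype (ι n)]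
    {cand : (n : ℕ) → ι n → Ω → α} (hmeas : ∀ n i, Measurable (cand n i))
    (hlaw : ∀ n i, P.map (cand n i) = μ) (hindep : iIndepFun (fun p : Σ n, ι n => cand p.1 p.2) P)
    {A : Set α} (hA : MeasurableSet A) (hsum : ∑' n, μ A ^ Fintype.card (ι n) = ∞) :
    ∀ᵐ ω ∂P, ∃ᶠ n in atTop, ∀ i, cand n i ω ∈ A := by
  set s : ℕ → Set Ω := fun n => ⋂ i, cand n i ⁻¹' A
  have hs : ∀ n, MeasurableSet (s n) := fun n => MeasurableSet.iInter fun i => hmeas n i hA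
  have hprob : ∀ n, P (s n) = μ A ^ Fintype.card (ι n) := fun n => by
    simpa using measure_biInter_iInter_preimage hmeas hlaw hindep hA {n}
  have hindepS : iIndepSet s P := (iIndepSet_iff_meas_biInter hs).2 fun F => by
    simp only [hprob, s, measure_biInter_iInter_preimage hmeas hlaw hindep hA F]
  have := hindepS.isProbabilityMeasure
  have hlimsup : limsup s atTop ∈ ae P :=
    (mem_ae_iff_prob_eq_one (MeasurableSet.measurableSet_limsup hs)).2
      (measure_limsup_eq_one hs hindepS (by simpa only [hprob] using hsum))
  filter_upwards [hlimsup] with ω hω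
  exact (mem_limsup_iff_frequently_mem.1 hω).mono fun n hn => Set.mem_iInter.1 hn

lemma ae_forall_apply_of_ae {I : Type*} [Countable I] {ι : I → Type*} [∀ n, Countable (ι n)]
    {cand : (n : I) → ι n → Ω → α} (hmeas : ∀ n i, Measurable (cand n i))
    (hlaw : ∀ n i, P.map (cand n i) = μ) {p : α → Prop} (hp : ∀ᵐ x ∂μ, p x) :
    ∀ᵐ ω ∂P, ∀ n i, p (cand n i ω) :=
  ae_all_iff.2 fun n => ae_all_iff.2 fun i =>
    ae_of_ae_map (hmeas n i).aemeasurable (hlaw n i ▸ hp)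

lemma ae_isLabelRegularAt {Y : Type*} [Countable Y] [TopologicalSpace α]
    [SecondCountableTopology α] (μ : Measure α) (f : α → Y) :
    ∀ᵐ w ∂μ, IsLabelRegularAt μ f w := by
  have hbasic : ∀ᵐ w ∂μ, ∀ b ∈ countableBasis α, ∀ y,
      μ (b ∩ {v | f v ≠ y}) = 0 → w ∈ b → f w = y :=
    (ae_ball_iff (countable_countableBasis α)).2 fun b _ => ae_all_iff.2 fun y =>
      eventually_imp_distrib_left.2 fun hnull => (measure_eq_zero_iff_ae_notMem.1 hnull).mono
        fun w hw hwb => not_not.1 fun hne => hw ⟨hwb, hne⟩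
  filter_upwards [hbasic] with w hw y ⟨U, hU, hnull⟩
  obtain ⟨b, hb, hwb, hbU⟩ := (isBasis_countableBasis α).mem_nhds_iff.1 hU
  exact hw b hb y (measure_mono_null (Set.inter_subset_inter_left _ hbU) hnull) hwb

lemma tsum_pow_eq_top {κ : ℕ → ℕ} (hκ : ∀ ρ : ℝ, 0 < ρ → ρ ≤ 1 →
      Tendsto (fun N => ∑ n ∈ Finset.Icc 1 N, ρ ^ κ n) atTop atTop)
    {a : ℝ≥0∞} (ha₀ : 0 < a) (ha₁ : a ≤ 1) : ∑' n, a ^ κ (n + 1) = ∞ := by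
  have ha : a ≠ ∞ := ne_top_of_le_ne_top ENNReal.one_ne_top ha₁
  refine ENNReal.tsum_eq_top_of_tendsto_sum_toReal ?_
  refine (hκ a.toReal (ENNReal.toReal_pos ha₀.ne' ha) (ENNReal.toReal_le_of_le_ofReal zero_le_one
    (by simpa using ha₁))).congr fun N => ?_
  simp only [ENNReal.toReal_pow]
  rw [Finset.range_eq_Ico, Finset.sum_Ico_add' (fun n => a.toReal ^ κ n) 0 N 1]
  rfl

lemma ae_forall_isOpen_exists_forall_mem [TopologicalSpace α] [SecondCountableTopology α]
    [OpensMeasurableSpace α] [IsProbabilityMeasure μ] {κ : ℕ → ℕ}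
    (hκ : ∀ ρ : ℝ, 0 < ρ → ρ ≤ 1 →
      Tendsto (fun N => ∑ n ∈ Finset.Icc 1 N, ρ ^ κ n) atTop atTop)
    {cand : (n : ℕ) → Fin (κ (n + 1)) → Ω → α} (hmeas : ∀ n i, Measurable (cand n i))
    (hlaw : ∀ n i, P.map (cand n i) = μ)
    (hindep : iIndepFun (fun p : Σ n : ℕ, Fin (κ (n + 1)) => cand p.1 p.2) P) :
    ∀ᵐ ω ∂P, ∀ U, IsOpen U → 0 < μ U → ∃ n, ∀ i, cand n i ω ∈ U := by
  have hbasic : ∀ᵐ ω ∂P, ∀ b ∈ countableBasis α, 0 < μ b → ∃ n, ∀ i, cand n i ω ∈ b :=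
    (ae_ball_iff (countable_countableBasis α)).2 fun b hb => eventually_imp_distrib_left.2
      fun hpos => (ae_frequently_forall_mem hmeas hlaw hindep
        (isOpen_of_mem_countableBasis hb).measurableSet
        (by simpa using tsum_pow_eq_top hκ hpos prob_le_one)).mono fun ω h => h.exists
  filter_upwards [hbasic] with ω hω U hU hpos
  obtain ⟨x, hxU, hx⟩ := Measure.nonempty_inter_support_of_pos hpos
  obtain ⟨b, hb, hxb, hbU⟩ := (isBasis_countableBasis α).exists_subset_of_mem_open hxU hU
  obtain ⟨n, hn⟩ := hω b hb ((Measure.mem_support_iff_forall x).1 hx b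
    ((isOpen_of_mem_countableBasis hb).mem_nhds hxb))
  exact ⟨n, fun i => hbU (hn i)⟩

end Sampling

theorem nmc_knn_limsup_null_general
    {X : Type*} [MetricSpace X] [TopologicalSpace.SeparableSpace X]
    [MeasurableSpace X] [BorelSpace X]
    {Y : Type*} [Countable Y]
    (μ : Measure X) [IsProbabilityMeasure μ] (f : X → Y)
    {Ω : Type*} [MeasurableSpace Ω] (P : Measure Ω)
    (K : ℕ)
    -- the candidate-count function κ : ℕ⁺ → ℕ⁺ (κ (n+1) candidates at step n+1)
    (κ : ℕ → ℕ)
    (hκ : ∀ ρ : ℝ, 0 < ρ → ρ ≤ 1 →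
      Tendsto (fun N => ∑ n ∈ Finset.Icc 1 N, ρ ^ κ n) atTop atTop)
    -- at step n+1, κ(n+1) candidates are drawn, iid with law μ
    (cand : (n : ℕ) → Fin (κ (n + 1)) → Ω → X)
    (hmeas : ∀ n i, Measurable (cand n i))
    (hlaw : ∀ n i, P.map (cand n i) = μ)
    (hindep : iIndepFun
      (fun p : Σ n : ℕ, Fin (κ (n + 1)) => cand p.1 p.2) P)
    -- the sample z_{n+1} is a candidate maximizing the heuristic Φ(·, Z_n)
    (z : ℕ → Ω → X)
    (hsel : ∀ ω n, ∃ i : Fin (κ (n + 1)), z (n + 1) ω = cand n i ω ∧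
      ∀ j : Fin (κ (n + 1)),
        nmcKNN f K (cand n j ω) (sampleSet z n ω) ≤
          nmcKNN f K (cand n i ω) (sampleSet z n ω))
    (hbdry : μ {b | IsFBoundaryPoint f μ b} = 0) :
    ∀ᵐ ω ∂P,
      μ (Filter.limsup (fun n => {x : X | 0 < nmcKNN f K x (sampleSet z n ω)}) atTop) = 0 := by
  have := UniformSpace.secondCountable_of_separable X
  filter_upwards [ae_forall_apply_of_ae hmeas hlaw (ae_isLabelRegularAt μ f),
    ae_forall_isOpen_exists_forall_mem hκ hmeas hlaw hindep] with ω hcand_label hcand_dense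
  have hz : ∀ n, ∃ i, z (n + 1) ω = cand n i ω := fun n => (hsel ω n).imp fun _ hi => hi.1
  have hlabel : ∀ w ∈ ⋃ n, sampleSet z n ω, IsLabelRegularAt μ f w := by
    intro w hw
    obtain ⟨m, i, rfl⟩ := exists_eq_of_mem_iUnion_sampleSet z ω hz hw
    exact hcand_label m i
  have hdense : ∀ U, IsOpen U → 0 < μ U → (U ∩ ⋃ n, sampleSet z n ω).Nonempty := by
    intro U hU hpos
    obtain ⟨n, hn⟩ := hcand_dense U hU hpos
    obtain ⟨i, hi⟩ := hz n
    exact ⟨z (n + 1) ω, hi ▸ hn i, Set.mem_iUnion.2 ⟨n + 1, succ_mem_sampleSet z ω n⟩⟩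
  refine measure_mono_null (fun x hx => ?_) (measure_union_null μ.measure_compl_support hbdry)
  by_contra hgood
  rw [Set.mem_union, Set.mem_compl_iff, not_or, not_not] at hgood
  have hzero := eventually_nmcKNN_eq_zero μ f K (sampleSet_mono z ω) (sampleSet_finite z ω)
    hlabel hdense hgood.1 hgood.2
  obtain ⟨n, hpos, hn⟩ := ((mem_limsup_iff_frequently_mem.1 hx).and_eventually hzero).exists
  exact hpos.ne' hn

/-- **The set of persistently non-modal points is null (`K`-nearest
neighbors).** Fix `K ≥ 2` and let `Qₙ = {x | Φ(x, Zₙ) > 0}` for the `K`-nearest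
neighbor non-modal count heuristic `Φ`. If `X` is separable and the
`f`-boundary has measure zero, then `μ(limsup Qₙ) = 0` with probability one. -/
theorem nmc_knn_limsup_null
    {X : Type*} [MetricSpace X] [TopologicalSpace.SeparableSpace X]
    [MeasurableSpace X] [BorelSpace X]
    {Y : Type*} [Countable Y]
    (μ : Measure X) [IsProbabilityMeasure μ] (f : X → Y)
    {Ω : Type*} [MeasurableSpace Ω] (P : Measure Ω) [IsProbabilityMeasure P]
    (K : ℕ) (hK : 2 ≤ K)
    -- the candidate-count function κ : ℕ⁺ → ℕ⁺ (κ (n+1) candidates at step n+1)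
    (κ : ℕ → ℕ) (hκpos : ∀ n, 1 ≤ κ n)
    (hκ : ∀ ρ : ℝ, 0 < ρ → ρ ≤ 1 →
      Tendsto (fun N => ∑ n ∈ Finset.Icc 1 N, ρ ^ κ n) atTop atTop)
    -- at step n+1, κ(n+1) candidates are drawn, iid with law μ
    (cand : (n : ℕ) → Fin (κ (n + 1)) → Ω → X)
    (hmeas : ∀ n i, Measurable (cand n i))
    (hlaw : ∀ n i, P.map (cand n i) = μ)
    (hindep : iIndepFun
      (fun p : Σ n : ℕ, Fin (κ (n + 1)) => cand p.1 p.2) P)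
    -- the sample z_{n+1} is a candidate maximizing the heuristic Φ(·, Z_n)
    (z : ℕ → Ω → X)
    (hsel : ∀ ω n, ∃ i : Fin (κ (n + 1)), z (n + 1) ω = cand n i ω ∧
      ∀ j : Fin (κ (n + 1)),
        nmcKNN f K (cand n j ω) (sampleSet z n ω) ≤
          nmcKNN f K (cand n i ω) (sampleSet z n ω))
    (hbdry : μ {b | IsFBoundaryPoint f μ b} = 0) :
    ∀ᵐ ω ∂P,
      μ (Filter.limsup (fun n => {x : X | 0 < nmcKNN f K x (sampleSet z n ω)}) atTop) = 0 :=
  nmc_knn_limsup_null_general μ f P K κ hκ cand hmeas hlaw hindep z hsel hbdry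
end
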